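/- arXiv:1011.1643 — 4 statements merged into one kernel-verified Lean document; each statement's English description precedes it below -/
import Mathlib

section
/- For every τ in the upper half-plane, the Jacobi identity ϑ₃(τ)⁴ = ϑ₂(τ)⁴ + ϑ₄(τ)⁴ holds. -/
/-!
With `q(x) = exp (π i τ |x|²)`, the fourth powers are lattice sums over `ℤ⁴`: `ϑ₃⁴ = ∑ q(n)`,
`ϑ₄⁴ = ∑ (-1)^(n₁+n₂+n₃+n₄) q(n)` and `ϑ₂⁴ = ∑ q(n + ½)`. Splitting `ℤ⁴` by the parity of
`n₁ + n₂ + n₃ + n₄` into `E + O`, we get `ϑ₃⁴ = E + O` and `ϑ₄⁴ = E - O`, so it remains to show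
`ϑ₂⁴ = 2 O`. Reflecting `n₁ + ½ ↦ -(n₁ + ½)` swaps the two parity classes of the sum for `ϑ₂⁴`, and the
orthogonal map `x ↦ H x / 2` (`H` the 4 × 4 Hadamard matrix) carries the points `n + ½` with
`n₁ + n₂ + n₃ + n₄` even bijectively onto the integer points with odd coordinate sum.
-/

open Complex

noncomputable def thetaC2 (τ : ℂ) : ℂ :=
  ∑' k : ℤ, Complex.exp (((k : ℂ) + 1 / 2) ^ 2 * (Real.pi : ℂ) * I * τ)

noncomputable def thetaC3 (τ : ℂ) : ℂ :=
  ∑' k : ℤ, Complex.exp ((k : ℂ) ^ 2 * (Real.pi : ℂ) * I * τ)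

noncomputable def thetaC4 (τ : ℂ) : ℂ :=
  ∑' k : ℤ, (-1 : ℂ) ^ k * Complex.exp ((k : ℂ) ^ 2 * (Real.pi : ℂ) * I * τ)

namespace Jacobi

local notation "ℤ⁴" => (Int × Int) × Int × Int

section QuadProd

variable {ι R : Type*}

def quadProd [Mul R] (u : ι → R) (p : (ι × ι) × ι × ι) : R :=
  u p.1.1 * u p.1.2 * (u p.2.1 * u p.2.2)

lemma quadProd_mul [CommMonoid R] (u v : ι → R) (p : (ι × ι) × ι × ι) :
    quadProd (u * v) p = quadProd u p * quadProd v p := by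
  simp only [quadProd, Pi.mul_apply]
  ac_rfl

variable [NormedRing R]

lemma summable_norm_quadProd {u : ι → R} (hu : Summable (‖u ·‖)) :
    Summable (‖quadProd u ·‖) :=
  Summable.mul_norm (f := fun z : ι × ι => u z.1 * u z.2) (g := fun z : ι × ι => u z.1 * u z.2)
    (hu.mul_norm hu) (hu.mul_norm hu)

lemma tsum_pow_four [CompleteSpace R] {u : ι → R} (hu : Summable (‖u ·‖)) :
    (∑' i, u i) ^ 4 = ∑' p, quadProd u p := by
  rw [show (∑' i, u i) ^ 4 = ((∑' i, u i) * ∑' i, u i) * ((∑' i, u i) * ∑' i, u i) by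
      rw [← sq (∑' i, u i), ← pow_add],
    tsum_mul_tsum_of_summable_norm hu hu,
    tsum_mul_tsum_of_summable_norm (hu.mul_norm hu) (hu.mul_norm hu)]
  rfl

end QuadProd

def parityEquiv : Bool × ℤ⁴ ≃ ℤ⁴ where
  toFun x := ((x.2.1.1, x.2.1.2), (x.2.2.1, x.2.1.1 + x.2.1.2 + x.2.2.1 + 2 * x.2.2.2 + x.1.toNat))
  invFun p := (decide ((p.2.2 - p.1.1 - p.1.2 - p.2.1) % 2 = 1),
    ((p.1.1, p.1.2), (p.2.1, (p.2.2 - p.1.1 - p.1.2 - p.2.1) / 2)))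
  left_inv := by
    rintro ⟨ε, ⟨a, b⟩, c, m⟩
    cases ε <;> simp <;> omega
  right_inv := by
    rintro ⟨⟨a, b⟩, c, d⟩
    by_cases hd : (d - a - b - c) % 2 = 1 <;> simp [hd] <;> omega

@[simp]
lemma parityEquiv_apply (ε : Bool) (a b c m : ℤ) :
    parityEquiv (ε, ((a, b), (c, m))) = ((a, b), (c, a + b + c + 2 * m + ε.toNat)) :=
  rfl

lemma tsum_eq_tsum_parityEquiv_add {E : Type*} [NormedAddCommGroup E] [CompleteSpace E]
    {u : ℤ⁴ → E} (hu : Summable u) :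
    ∑' p, u p = ∑' v, u (parityEquiv (false, v)) + ∑' v, u (parityEquiv (true, v)) := by
  have hs : Summable fun x => u (parityEquiv x) := parityEquiv.summable_iff.mpr hu
  rw [← parityEquiv.tsum_eq u, hs.tsum_prod, tsum_bool]

lemma quadProd_neg_one_zpow_parityEquiv {R : Type*} [DivisionRing R] (ε : Bool) (v : ℤ⁴) :
    quadProd (fun n : ℤ => (-1 : R) ^ n) (parityEquiv (ε, v)) = (-1) ^ ε.toNat := by
  obtain ⟨⟨a, b⟩, c, m⟩ := v
  have hs : a + b + (c + (a + b + c + 2 * m + ε.toNat)) = 2 * (a + b + c + m) + ε.toNat := by ring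
  simp only [parityEquiv_apply, quadProd]
  rw [← zpow_add₀ (by norm_num), ← zpow_add₀ (by norm_num),
    ← zpow_add₀ (by norm_num), hs, zpow_add₀ (by norm_num), zpow_mul]
  simp

noncomputable def thetaTerm (τ x : ℂ) : ℂ := cexp (x ^ 2 * (Real.pi : ℂ) * I * τ)

lemma thetaTerm_int_add (τ x : ℂ) (n : ℤ) :
    thetaTerm τ (n + x) = thetaTerm τ x * jacobiTheta₂_term n (x * τ) τ := by
  rw [thetaTerm, thetaTerm, jacobiTheta₂_term, ← Complex.exp_add]
  congr 1
  ring

lemma summable_norm_thetaTerm_int_add {τ : ℂ} (hτ : 0 < τ.im) (x : ℂ) :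
    Summable fun n : ℤ => ‖thetaTerm τ (n + x)‖ := by
  simp only [thetaTerm_int_add]
  exact summable_norm_iff.mpr (((summable_jacobiTheta₂_term_iff _ τ).mpr hτ).mul_left _)

lemma quadProd_thetaTerm {ι : Type*} (τ : ℂ) (x : ι → ℂ) (p : (ι × ι) × ι × ι) :
    quadProd (fun i => thetaTerm τ (x i)) p =
      cexp ((x p.1.1 ^ 2 + x p.1.2 ^ 2 + x p.2.1 ^ 2 + x p.2.2 ^ 2) * (Real.pi : ℂ) * I * τ) := by
  simp only [quadProd, thetaTerm, ← Complex.exp_add]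
  congr 1
  ring

-- The reflection `n₁ + ½ ↦ -(n₁ + ½)` in parity coordinates; it flips the parity class.
def negFirstParam : ℤ⁴ ≃ ℤ⁴ where
  toFun v := ((-v.1.1 - 1, v.1.2), (v.2.1, v.1.1 + v.2.2))
  invFun v := ((-v.1.1 - 1, v.1.2), (v.2.1, v.1.1 + v.2.2 + 1))
  left_inv := by
    rintro ⟨⟨a, b⟩, c, m⟩
    ext <;> dsimp only <;> ring
  right_inv := by
    rintro ⟨⟨a, b⟩, c, m⟩
    ext <;> dsimp only <;> ring

-- With `n = parityEquiv (true, v)` and `w = parityEquiv (false, hadamardParam v)`, this is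
-- `w + ½ = H n / 2` for the 4 × 4 Hadamard matrix `H`; as `H / 2` is orthogonal, `|w + ½| = |n|`.
def hadamardParam : ℤ⁴ ≃ ℤ⁴ where
  toFun v := ((v.1.1 + v.1.2 + v.2.1 + v.2.2, -v.2.1 - v.2.2 - 1), (-v.1.2 - v.2.2 - 1, v.2.2 + 1))
  invFun v := ((v.1.1 + v.1.2 + v.2.1 + v.2.2 + 1, -v.2.1 - v.2.2), (-v.1.2 - v.2.2, v.2.2 - 1))
  left_inv := by
    rintro ⟨⟨a, b⟩, c, m⟩
    ext <;> dsimp only <;> ring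
  right_inv := by
    rintro ⟨⟨a, b⟩, c, m⟩
    ext <;> dsimp only <;> ring

lemma quadProd_thetaTerm_half_negFirstParam (τ : ℂ) (v : ℤ⁴) :
    quadProd (fun n : ℤ => thetaTerm τ (n + 1 / 2)) (parityEquiv (true, negFirstParam v)) =
      quadProd (fun n : ℤ => thetaTerm τ (n + 1 / 2)) (parityEquiv (false, v)) := by
  obtain ⟨⟨a, b⟩, c, m⟩ := v
  simp only [quadProd_thetaTerm, negFirstParam, Equiv.coe_fn_mk, parityEquiv_apply, Bool.toNat_true,
    Bool.toNat_false]
  congr 1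
  push_cast
  ring

lemma quadProd_thetaTerm_half_hadamardParam (τ : ℂ) (v : ℤ⁴) :
    quadProd (fun n : ℤ => thetaTerm τ (n + 1 / 2)) (parityEquiv (false, hadamardParam v)) =
      quadProd (fun n : ℤ => thetaTerm τ n) (parityEquiv (true, v)) := by
  obtain ⟨⟨a, b⟩, c, m⟩ := v
  simp only [quadProd_thetaTerm, hadamardParam, Equiv.coe_fn_mk, parityEquiv_apply, Bool.toNat_true,
    Bool.toNat_false]
  congr 1
  push_cast
  ring

-- The part of `∑_{n ∈ ℤ⁴} exp (π i τ |n|²)` over the `n` with `n₁ + n₂ + n₃ + n₄ ≡ ε [ZMOD 2]`.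
noncomputable def paritySum (τ : ℂ) (ε : Bool) : ℂ :=
  ∑' v, quadProd (fun n : ℤ => thetaTerm τ n) (parityEquiv (ε, v))

variable {τ : ℂ}

lemma summable_norm_thetaTerm_int (hτ : 0 < τ.im) :
    Summable fun n : ℤ => ‖thetaTerm τ n‖ := by
  simpa using summable_norm_thetaTerm_int_add hτ 0

lemma thetaC3_pow_four (hτ : 0 < τ.im) :
    thetaC3 τ ^ 4 = paritySum τ false + paritySum τ true := by
  have hu := summable_norm_thetaTerm_int hτ
  show (∑' n : ℤ, thetaTerm τ n) ^ 4 = _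
  exact (tsum_pow_four hu).trans (tsum_eq_tsum_parityEquiv_add (summable_norm_quadProd hu).of_norm)

lemma thetaC4_pow_four (hτ : 0 < τ.im) :
    thetaC4 τ ^ 4 = paritySum τ false - paritySum τ true := by
  have hu : Summable fun n : ℤ => ‖(-1 : ℂ) ^ n * thetaTerm τ n‖ := by
    simpa [norm_zpow] using summable_norm_thetaTerm_int hτ
  have hsign (ε : Bool) (v : ℤ⁴) :
      quadProd (fun n : ℤ => (-1 : ℂ) ^ n * thetaTerm τ n) (parityEquiv (ε, v)) =
        (-1) ^ ε.toNat * quadProd (fun n : ℤ => thetaTerm τ n) (parityEquiv (ε, v)) := by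
    rw [← quadProd_neg_one_zpow_parityEquiv, ← quadProd_mul]
    rfl
  show (∑' n : ℤ, (-1 : ℂ) ^ n * thetaTerm τ n) ^ 4 = _
  rw [tsum_pow_four hu, tsum_eq_tsum_parityEquiv_add (summable_norm_quadProd hu).of_norm,
    paritySum, paritySum, sub_eq_add_neg, ← tsum_neg]
  simp only [hsign, Bool.toNat_false, Bool.toNat_true, pow_zero, pow_one, one_mul, neg_one_mul]

lemma thetaC2_pow_four (hτ : 0 < τ.im) :
    thetaC2 τ ^ 4 = 2 * paritySum τ true := by
  have hu := summable_norm_thetaTerm_int_add hτ (1 / 2)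
  set G : ℤ⁴ → ℂ := quadProd fun n : ℤ => thetaTerm τ (n + 1 / 2)
  have hodd : ∑' v, G (parityEquiv (true, v)) = ∑' v, G (parityEquiv (false, v)) := by
    rw [← negFirstParam.tsum_eq]
    exact tsum_congr (quadProd_thetaTerm_half_negFirstParam τ)
  have heven : ∑' v, G (parityEquiv (false, v)) = paritySum τ true := by
    rw [← hadamardParam.tsum_eq]
    exact tsum_congr (quadProd_thetaTerm_half_hadamardParam τ)
  show (∑' n : ℤ, thetaTerm τ (n + 1 / 2)) ^ 4 = _
  rw [tsum_pow_four hu, tsum_eq_tsum_parityEquiv_add (summable_norm_quadProd hu).of_norm, hodd,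
    heven, two_mul]

end Jacobi

open Jacobi in
/-- Jacobi's identity ϑ₃⁴ = ϑ₂⁴ + ϑ₄⁴. -/
theorem jacobi_identity (τ : ℂ) (hτ : 0 < τ.im) :
    thetaC3 τ ^ 4 = thetaC2 τ ^ 4 + thetaC4 τ ^ 4 := by
  rw [thetaC3_pow_four hτ, thetaC2_pow_four hτ, thetaC4_pow_four hτ]
  ring
end

section
/- Euler's pentagonal number theorem in eta-form: for τ in the upper half-plane, exp(πiτ/12)·∏_{k≥1}(1 - exp(2kπiτ)) = exp(πiτ/12)·∑_{k∈ℤ} (-1)^k exp((3k²+k)πiτ); equivalently ∏_{k≥1}(1 - q²ᵏ) = ∑_{k∈ℤ}(-1)^k q^{3k²+k} with q = exp(πiτ). -/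
/-!
For `‖x‖ < 1`, every convergence hypothesis of the ring-theoretic pentagonal number theorem
`Pentagonal.tprod_one_sub_pow` follows from the uniform bound
`‖∏ i ∈ s, (1 - x ^ (i + 1))‖ ≤ exp (1 - ‖x‖)⁻¹` on its finite partial products. The eta form is the
case `x = exp (2πiτ)`, with the two `ℕ`-indexed halves of the series folded into one sum over `ℤ`.
-/

open Finset Filter Topology

namespace Pentagonal

section NormedRing

variable {R : Type*} [NormedCommRing R] [NormOneClass R] {x : R}

lemma norm_pow_le_norm_pow_of_le (hx : ‖x‖ ≤ 1) {m n : ℕ} (h : m ≤ n) : ‖x ^ n‖ ≤ ‖x‖ ^ m :=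
  (norm_pow_le x n).trans (pow_le_pow_of_le_one (norm_nonneg x) hx h)

lemma summable_neg_one_pow_mul_pow [CompleteSpace R] (hx : ‖x‖ < 1) {e : ℕ → ℕ}
    (he : ∀ k, k ≤ e k) : Summable fun k ↦ (-1 : R) ^ k * x ^ e k := by
  refine (summable_geometric_of_lt_one (norm_nonneg x) hx).of_norm_bounded fun k ↦ ?_
  calc ‖(-1 : R) ^ k * x ^ e k‖ ≤ ‖(-1 : R)‖ ^ k * ‖x ^ e k‖ :=
        (norm_mul_le _ _).trans (mul_le_mul_of_nonneg_right (norm_pow_le _ _) (norm_nonneg _))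
    _ ≤ ‖x‖ ^ k := by
        rw [norm_neg, norm_one, one_pow, one_mul]
        exact norm_pow_le_norm_pow_of_le hx.le (he k)

lemma norm_prod_one_sub_pow_le (hx : ‖x‖ < 1) (k m : ℕ) :
    ‖∏ i ∈ range m, (1 - x ^ (k + i + 1))‖ ≤ Real.exp (1 - ‖x‖)⁻¹ := by
  have hgeom : ∑ i ∈ range m, ‖x‖ ^ i ≤ (1 - ‖x‖)⁻¹ :=
    tsum_geometric_of_lt_one (norm_nonneg x) hx ▸
      (summable_geometric_of_lt_one (norm_nonneg x) hx).sum_le_tsum _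
        fun i _ ↦ pow_nonneg (norm_nonneg x) i
  calc ‖∏ i ∈ range m, (1 - x ^ (k + i + 1))‖
      ≤ ‖∏ i ∈ range m, (1 + -x ^ (k + i + 1)) - 1‖ + ‖(1 : R)‖ := by
        simpa [sub_eq_add_neg] using norm_le_norm_sub_add (∏ i ∈ range m, (1 - x ^ (k + i + 1))) 1
    _ ≤ Real.exp (∑ i ∈ range m, ‖-x ^ (k + i + 1)‖) := by
        have := norm_prod_one_add_sub_one_le (range m) fun i ↦ -x ^ (k + i + 1)
        rw [norm_one]
        linarith
    _ ≤ Real.exp (1 - ‖x‖)⁻¹ := by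
        gcongr
        refine le_trans (sum_le_sum fun i _ ↦ ?_) hgeom
        rw [norm_neg]
        exact norm_pow_le_norm_pow_of_le hx.le (by omega)

lemma norm_pow_mul_prod_one_sub_pow_le (hx : ‖x‖ < 1) (k n : ℕ) :
    ‖x ^ ((k + 1) * n) * ∏ i ∈ range (n + 1), (1 - x ^ (k + i + 1))‖
      ≤ Real.exp (1 - ‖x‖)⁻¹ * ‖x‖ ^ n := by
  rw [mul_comm (Real.exp _)]
  refine (norm_mul_le _ _).trans (mul_le_mul (norm_pow_le_norm_pow_of_le hx.le ?_)
    (norm_prod_one_sub_pow_le hx k (n + 1)) (norm_nonneg _) (by positivity))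
  nlinarith

lemma summable_pow_mul_prod_one_sub_pow [CompleteSpace R] (hx : ‖x‖ < 1) (k : ℕ) :
    Summable fun n ↦ x ^ ((k + 1) * n) * ∏ i ∈ range (n + 1), (1 - x ^ (k + i + 1)) :=
  ((summable_geometric_of_lt_one (norm_nonneg x) hx).mul_left _).of_norm_bounded
    (norm_pow_mul_prod_one_sub_pow_le hx k)

lemma norm_tsum_pow_mul_prod_one_sub_pow_le (hx : ‖x‖ < 1) (k : ℕ) :
    ‖∑' n, x ^ ((k + 1) * n) * ∏ i ∈ range (n + 1), (1 - x ^ (k + i + 1))‖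
      ≤ Real.exp (1 - ‖x‖)⁻¹ * (1 - ‖x‖)⁻¹ :=
  tsum_of_norm_bounded ((hasSum_geometric_of_lt_one (norm_nonneg x) hx).mul_left _)
    (norm_pow_mul_prod_one_sub_pow_le hx k)

lemma multipliable_one_sub_pow_add [CompleteSpace R] (hx : ‖x‖ < 1) (k : ℕ) :
    Multipliable fun n ↦ 1 - x ^ (n + k + 1) := by
  simp_rw [sub_eq_add_neg]
  refine multipliable_one_add_of_summable <|
    (summable_geometric_of_lt_one (norm_nonneg x) hx).of_nonneg_of_le (fun _ ↦ norm_nonneg _)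
      fun n ↦ ?_
  rw [norm_neg]
  exact norm_pow_le_norm_pow_of_le hx.le (by omega)

lemma tendsto_pentagonal_tail (hx : ‖x‖ < 1) :
    Tendsto (fun k ↦ (-1) ^ (k + 1) * x ^ ((k + 1) * (3 * k + 4) / 2) *
      ∑' n, x ^ ((k + 1) * n) * ∏ i ∈ range (n + 1), (1 - x ^ (k + i + 1))) atTop (𝓝 0) := by
  have hC := (tendsto_pow_atTop_nhds_zero_of_lt_one (norm_nonneg x) hx).mul_const
    (Real.exp (1 - ‖x‖)⁻¹ * (1 - ‖x‖)⁻¹)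
  rw [zero_mul] at hC
  refine squeeze_zero_norm (fun k ↦ ?_) hC
  refine (norm_mul_le _ _).trans ?_
  refine mul_le_mul ?_ (norm_tsum_pow_mul_prod_one_sub_pow_le hx k) (norm_nonneg _)
    (pow_nonneg (norm_nonneg x) k)
  refine (norm_mul_le _ _).trans ?_
  rw [← one_mul (‖x‖ ^ k)]
  refine mul_le_mul ?_ (norm_pow_le_norm_pow_of_le hx.le ?_) (norm_nonneg _) zero_le_one
  · simpa using norm_pow_le (-1 : R) (k + 1)
  · rw [Nat.le_div_iff_mul_le two_pos]
    nlinarith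

lemma le_pentagonal_neg (k : ℕ) : k ≤ pentagonal (-k) := by
  have := two_mul_natCast_pentagonal_neg k
  zify
  nlinarith

lemma le_pentagonal_add_one (k : ℕ) : k ≤ pentagonal (k + 1) := by
  have := two_mul_natCast_pentagonal (k + 1)
  zify
  nlinarith

theorem tprod_one_sub_pow_of_norm_lt_one [CompleteSpace R] (hx : ‖x‖ < 1) :
    ∏' n, (1 - x ^ (n + 1)) =
      ∑' k : ℕ, (-1) ^ k * (x ^ pentagonal (-k) - x ^ pentagonal (k + 1)) := by
  refine tprod_one_sub_pow (tendsto_pow_atTop_nhds_zero_of_norm_lt_one hx)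
    (summable_pow_mul_prod_one_sub_pow hx) (multipliable_one_sub_pow_add hx) ?_
    (tendsto_pentagonal_tail hx)
  simp_rw [mul_sub]
  exact (summable_neg_one_pow_mul_pow hx le_pentagonal_neg).sub
    (summable_neg_one_pow_mul_pow hx le_pentagonal_add_one)

end NormedRing

theorem tprod_one_sub_pow_eq_tsum_int {𝕜 : Type*} [NormedField 𝕜] [CompleteSpace 𝕜] {x : 𝕜}
    (hx : ‖x‖ < 1) :
    ∏' n, (1 - x ^ (n + 1)) = ∑' k : ℤ, (-1) ^ k * x ^ pentagonal (-k) := by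
  have hsign (k : ℕ) : (-1 : 𝕜) ^ (-((k : ℤ) + 1)) = -(-1) ^ k := by
    rw [zpow_neg, zpow_add_one₀ (by norm_num), zpow_natCast, mul_neg_one, inv_neg, ← inv_pow,
      inv_neg, inv_one]
  have hpos : Summable fun k : ℕ ↦ (-1 : 𝕜) ^ (k : ℤ) * x ^ pentagonal (-k) := by
    simpa only [zpow_natCast] using summable_neg_one_pow_mul_pow hx le_pentagonal_neg
  have hneg : Summable fun k : ℕ ↦
      (-1 : 𝕜) ^ (-((k : ℤ) + 1)) * x ^ pentagonal (-(-((k : ℤ) + 1))) := by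
    simpa only [hsign, neg_neg, neg_mul] using
      (summable_neg_one_pow_mul_pow hx le_pentagonal_add_one).neg
  rw [tprod_one_sub_pow_of_norm_lt_one hx,
    tsum_of_nat_of_neg_add_one (f := fun k : ℤ ↦ (-1 : 𝕜) ^ k * x ^ pentagonal (-k)) hpos hneg,
    ← hpos.tsum_add hneg]
  refine tsum_congr fun k ↦ ?_
  simp only [zpow_natCast, hsign, neg_neg]
  ring

end Pentagonal

open Complex

/-- Euler's pentagonal number theorem in eta-form. -/
theorem pentagonal_number_theorem_eta (τ : ℂ) (hτ : 0 < τ.im) :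
    Complex.exp ((Real.pi : ℂ) * I * τ / 12) *
        ∏' k : ℕ, (1 - Complex.exp (2 * ((k : ℂ) + 1) * (Real.pi : ℂ) * I * τ))
      = Complex.exp ((Real.pi : ℂ) * I * τ / 12) *
        ∑' k : ℤ, (-1 : ℂ) ^ k
          * Complex.exp ((3 * (k : ℂ) ^ 2 + (k : ℂ)) * (Real.pi : ℂ) * I * τ) := by
  set x := Complex.exp (2 * Real.pi * I * τ)
  have hx : ‖x‖ < 1 := UpperHalfPlane.norm_exp_two_pi_I_lt_one ⟨τ, hτ⟩
  have hprod (k : ℕ) : Complex.exp (2 * ((k : ℂ) + 1) * Real.pi * I * τ) = x ^ (k + 1) := by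
    rw [← Complex.exp_nat_mul]
    push_cast
    ring_nf
  have hsum (k : ℤ) : Complex.exp ((3 * (k : ℂ) ^ 2 + k) * Real.pi * I * τ) =
      x ^ pentagonal (-k) := by
    have h : (2 * pentagonal (-k) : ℂ) = k * (3 * k + 1) := by
      exact_mod_cast two_mul_natCast_pentagonal_neg k
    rw [← Complex.exp_nat_mul]
    congr 1
    linear_combination -(Real.pi * I * τ) * h
  simp_rw [hprod, hsum]
  rw [Pentagonal.tprod_one_sub_pow_eq_tsum_int hx]
end

section
/- Suppose differentiable functions ϑ₂, ϑ₃, ϑ₄, η of τ satisfy the system dϑ₂/dτ = (i/π){η + (π²/12)(ϑ₃⁴+ϑ₄⁴)}ϑ₂, dϑ₃/dτ = (i/π){η + (π²/12)(ϑ₃⁴+ϑ₄⁴ − 3B⁴ϑ₄⁴)}ϑ₃, dϑ₄/dτ = (i/π){η + (π²/12)(ϑ₃⁴+ϑ₄⁴ − 3A⁴ϑ₃⁴)}ϑ₄ for constants A, B, and ϑ₂ never vanishes. Then the quantity 𝔄⁴ := (A⁴ϑ₃⁴ − B⁴ϑ₄⁴)/ϑ₂⁴ is constant in τ, i.e. its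 derivative vanishes identically. -/
open Complex

/-
Writing each equation as a logarithmic derivative, `ϑⱼ' = pⱼ ϑⱼ`, one gets
`(ϑ₃⁴/ϑ₂⁴)' = 4 (p₃ - p₂) ϑ₃⁴/ϑ₂⁴ = -iπ B⁴ϑ₄⁴ · ϑ₃⁴/ϑ₂⁴` and symmetrically
`(ϑ₄⁴/ϑ₂⁴)' = -iπ A⁴ϑ₃⁴ · ϑ₄⁴/ϑ₂⁴`, so the two terms of `𝔄⁴` have equal derivatives
after multiplying by `A⁴` and `B⁴` respectively.
-/

section LogDeriv

variable {𝕜 : Type*} [NontriviallyNormedField 𝕜] {u w : 𝕜 → 𝕜} {p r x : 𝕜}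

theorem HasDerivAt.pow_of_logDeriv (hu : HasDerivAt u (p * u x) x) (n : ℕ) :
    HasDerivAt (fun s => u s ^ n) (n * p * u x ^ n) x := by
  refine (hu.fun_pow n).congr_deriv ?_
  cases n with
  | zero => simp
  | succ n => push_cast; ring

theorem HasDerivAt.div_of_logDeriv (hu : HasDerivAt u (p * u x) x)
    (hw : HasDerivAt w (r * w x) x) (hw0 : w x ≠ 0) :
    HasDerivAt (fun s => u s / w s) ((p - r) * (u x / w x)) x := by
  refine (hu.fun_div hw hw0).congr_deriv ?_
  field_simp

end LogDeriv

theorem frakA_is_integral_general (I' : Set ℂ)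
    (t2 t3 t4 η : ℂ → ℂ) (A B : ℂ)
    (h2ne : ∀ τ ∈ I', t2 τ ≠ 0)
    (h2 : ∀ τ ∈ I', HasDerivAt t2
      ((I / (Real.pi : ℂ)) * (η τ + (Real.pi : ℂ) ^ 2 / 12 * (t3 τ ^ 4 + t4 τ ^ 4)) * t2 τ) τ)
    (h3 : ∀ τ ∈ I', HasDerivAt t3
      ((I / (Real.pi : ℂ)) * (η τ + (Real.pi : ℂ) ^ 2 / 12 *
        (t3 τ ^ 4 + t4 τ ^ 4 - 3 * B ^ 4 * t4 τ ^ 4)) * t3 τ) τ)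
    (h4 : ∀ τ ∈ I', HasDerivAt t4
      ((I / (Real.pi : ℂ)) * (η τ + (Real.pi : ℂ) ^ 2 / 12 *
        (t3 τ ^ 4 + t4 τ ^ 4 - 3 * A ^ 4 * t3 τ ^ 4)) * t4 τ) τ) :
    ∀ τ ∈ I', HasDerivAt
      (fun s => (A ^ 4 * t3 s ^ 4 - B ^ 4 * t4 s ^ 4) / t2 s ^ 4) 0 τ := by
  intro τ hτ
  have hden := (h2 τ hτ).pow_of_logDeriv 4
  have hne : t2 τ ^ 4 ≠ 0 := pow_ne_zero 4 (h2ne τ hτ)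
  have h32 := ((h3 τ hτ).pow_of_logDeriv 4).div_of_logDeriv hden hne
  have h42 := ((h4 τ hτ).pow_of_logDeriv 4).div_of_logDeriv hden hne
  have hdiff := (h32.const_mul (A ^ 4)).fun_sub (h42.const_mul (B ^ 4))
  simp only [← mul_div_assoc, ← sub_div] at hdiff
  exact hdiff.congr_deriv (by ring)

/-- The quantity 𝔄⁴ = (A⁴ϑ₃⁴ − B⁴ϑ₄⁴)/ϑ₂⁴ is an algebraic integral of the
    non-canonical ϑ-constant system. -/
theorem frakA_is_integral (I' : Set ℂ) (hI : IsOpen I')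
    (t2 t3 t4 η : ℂ → ℂ) (A B : ℂ)
    (h2ne : ∀ τ ∈ I', t2 τ ≠ 0)
    (h2 : ∀ τ ∈ I', HasDerivAt t2
      ((I / (Real.pi : ℂ)) * (η τ + (Real.pi : ℂ) ^ 2 / 12 * (t3 τ ^ 4 + t4 τ ^ 4)) * t2 τ) τ)
    (h3 : ∀ τ ∈ I', HasDerivAt t3
      ((I / (Real.pi : ℂ)) * (η τ + (Real.pi : ℂ) ^ 2 / 12 *
        (t3 τ ^ 4 + t4 τ ^ 4 - 3 * B ^ 4 * t4 τ ^ 4)) * t3 τ) τ)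
    (h4 : ∀ τ ∈ I', HasDerivAt t4
      ((I / (Real.pi : ℂ)) * (η τ + (Real.pi : ℂ) ^ 2 / 12 *
        (t3 τ ^ 4 + t4 τ ^ 4 - 3 * A ^ 4 * t3 τ ^ 4)) * t4 τ) τ) :
    ∀ τ ∈ I', HasDerivAt
      (fun s => (A ^ 4 * t3 s ^ 4 - B ^ 4 * t4 s ^ 4) / t2 s ^ 4) 0 τ :=
  frakA_is_integral_general I' t2 t3 t4 η A B h2ne h2 h3 h4
end

section
/- Suppose differentiable functions θ₁, θ₂, θ₃, θ₄, θ₁' of z satisfy the system ∂θ₁/∂z = θ₁', ∂θₖ/∂z = (θ₁'/θ₁)θₖ − π ϑₖ²·(θ_ν θ_μ)/θ₁ for (k,ν,μ) ∈ {(2,3,4),(3,4,2),(4,2,3)} with constants ϑ₂, ϑ₃, ϑ₄, and θ₁ never vanishes. Then the quantity (ϑ₂²θ₄² − ϑ₄²θ₂²)/θ₁² is constant in z (its z-derivative vanishes identically). -/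
open Complex

/-! The numerator `ϑ₂²θ₄² − ϑ₄²θ₂²` has logarithmic derivative `2θ₁'/θ₁`: the `θ₁'/θ₁` parts of
the equations for `θ₂` and `θ₄` contribute exactly that, while the remaining terms
`−2πϑ₂²ϑ₄²θ₂θ₃θ₄/θ₁` cancel in pairs. Dividing by `θ₁²` removes the logarithmic derivative. -/

theorem hasDerivAt_div_sq_zero_of_logDeriv {𝕜 : Type*} [NontriviallyNormedField 𝕜]
    {N g : 𝕜 → 𝕜} {g' z : 𝕜} (hg : HasDerivAt g g' z) (hgz : g z ≠ 0)
    (hN : HasDerivAt N (2 * (g' / g z) * N z) z) :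
    HasDerivAt (fun w => N w / g w ^ 2) 0 z := by
  refine (hN.div (hg.pow 2) (pow_ne_zero 2 hgz)).congr_deriv ?_
  simp only [Pi.pow_apply]
  field_simp
  ring

theorem theta_quadratic_integral_general (U : Set ℂ)
    (t1 t2 t3 t4 t1' : ℂ → ℂ) (v2 v4 : ℂ)
    (h1ne : ∀ z ∈ U, t1 z ≠ 0)
    (h1 : ∀ z ∈ U, HasDerivAt t1 (t1' z) z)
    (h2 : ∀ z ∈ U, HasDerivAt t2
      (t1' z / t1 z * t2 z - (Real.pi : ℂ) * v2 ^ 2 * (t3 z * t4 z) / t1 z) z)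
    (h4 : ∀ z ∈ U, HasDerivAt t4
      (t1' z / t1 z * t4 z - (Real.pi : ℂ) * v4 ^ 2 * (t2 z * t3 z) / t1 z) z) :
    ∀ z ∈ U, HasDerivAt
      (fun w => (v2 ^ 2 * t4 w ^ 2 - v4 ^ 2 * t2 w ^ 2) / t1 w ^ 2) 0 z := by
  intro z hz
  have hnum : HasDerivAt (fun w => v2 ^ 2 * t4 w ^ 2 - v4 ^ 2 * t2 w ^ 2)
      (2 * (t1' z / t1 z) * (v2 ^ 2 * t4 z ^ 2 - v4 ^ 2 * t2 z ^ 2)) z := by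
    refine ((((h4 z hz).pow 2).const_mul (v2 ^ 2)).sub
      (((h2 z hz).pow 2).const_mul (v4 ^ 2))).congr_deriv ?_
    ring
  exact hasDerivAt_div_sq_zero_of_logDeriv (h1 z hz) (h1ne z hz) hnum

/-- The quadratic Jacobi identity (ϑ₂²θ₄² − ϑ₄²θ₂²)/θ₁² is an algebraic integral of
    the z-differential system for theta-functions (Theorem 7.1). -/
theorem theta_quadratic_integral (U : Set ℂ) (hU : IsOpen U) (hUconn : IsConnected U)
    (t1 t2 t3 t4 t1' : ℂ → ℂ) (v2 v3 v4 : ℂ)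
    (h1ne : ∀ z ∈ U, t1 z ≠ 0)
    (h1 : ∀ z ∈ U, HasDerivAt t1 (t1' z) z)
    (h2 : ∀ z ∈ U, HasDerivAt t2
      (t1' z / t1 z * t2 z - (Real.pi : ℂ) * v2 ^ 2 * (t3 z * t4 z) / t1 z) z)
    (h3 : ∀ z ∈ U, HasDerivAt t3
      (t1' z / t1 z * t3 z - (Real.pi : ℂ) * v3 ^ 2 * (t4 z * t2 z) / t1 z) z)
    (h4 : ∀ z ∈ U, HasDerivAt t4
      (t1' z / t1 z * t4 z - (Real.pi : ℂ) * v4 ^ 2 * (t2 z * t3 z) / t1 z) z) :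
    ∀ z ∈ U, HasDerivAt
      (fun w => (v2 ^ 2 * t4 w ^ 2 - v4 ^ 2 * t2 w ^ 2) / t1 w ^ 2) 0 z :=
  theta_quadratic_integral_general U t1 t2 t3 t4 t1' v2 v4 h1ne h1 h2 h4
end
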